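/- arXiv:2506.11843 — 2 statements merged into one kernel-verified Lean document; each statement's English description precedes it below -/
import Mathlib

section
/- Let ξ : ℝ → [0,∞) satisfy ξ(y) → ∞ as y → ±∞. Then there exists an even C^∞ function ψ : ℝ → [0,∞), non-decreasing on [0,∞), such that ψ(y) → ∞ and ξ(y)/ψ(y) → ∞ as y → ±∞, and for all y with |y| ≥ 1, ψ''(y) ≤ 0 and |ψ'(y)| ≤ 1/(1+|y|). -/
open Filter Set

namespace Stmt1Helper

noncomputable def gterm (lam : ℕ → ℝ) (n : ℕ) (y : ℝ) : ℝ :=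
  1 - Real.exp (-(lam n * Real.log (1 + y ^ 2)))

noncomputable def gderiv (lam : ℕ → ℝ) (n : ℕ) (y : ℝ) : ℝ :=
  lam n * (2 * y / (1 + y ^ 2) * Real.exp (-(lam n * Real.log (1 + y ^ 2))))

noncomputable def gderiv2 (lam : ℕ → ℝ) (n : ℕ) (y : ℝ) : ℝ :=
  lam n * Real.exp (-(lam n * Real.log (1 + y ^ 2))) *
    (2 * (1 - y ^ 2) / (1 + y ^ 2) ^ 2 - lam n * (2 * y / (1 + y ^ 2)) ^ 2)

noncomputable def psi (lam : ℕ → ℝ) (y : ℝ) : ℝ := ∑' n, gterm lam n y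

lemma one_add_sq_pos (y : ℝ) : (0:ℝ) < 1 + y ^ 2 := by positivity

lemma log_one_add_sq_nonneg (y : ℝ) : 0 ≤ Real.log (1 + y ^ 2) := by
  apply Real.log_nonneg; nlinarith [sq_nonneg y]

lemma one_sub_exp_neg_le (x : ℝ) : 1 - Real.exp (-x) ≤ x := by
  nlinarith [Real.add_one_le_exp (-x)]

lemma summable_half_pow : Summable (fun n : ℕ => ((1:ℝ)/2) ^ n) :=
  summable_geometric_of_lt_one (by norm_num) (by norm_num)

lemma tsum_half_pow : ∑' n : ℕ, ((1:ℝ)/2) ^ n = 2 := by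
  rw [tsum_geometric_of_lt_one (by norm_num) (by norm_num)]; norm_num

section

variable {lam : ℕ → ℝ} (hpos : ∀ n, 0 < lam n) (hlam : ∀ n, lam n ≤ (1/2) ^ n / 16)

include hpos hlam in
lemma summable_lam : Summable lam := by
  apply Summable.of_nonneg_of_le (fun n => (hpos n).le) (fun n => (hlam n).trans ?_)
    (summable_half_pow.div_const 16)
  · simp

include hpos hlam in
lemma tsum_lam_le : ∑' n, lam n ≤ 1/4 := by
  have h1 : ∑' n, lam n ≤ ∑' n : ℕ, ((1:ℝ)/2) ^ n / 16 :=
    Summable.tsum_le_tsum (fun n => (hlam n)) (summable_lam hpos hlam)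
      (summable_half_pow.div_const 16)
  have h2 : ∑' n : ℕ, ((1:ℝ)/2) ^ n / 16 = 2 / 16 := by
    rw [tsum_div_const, tsum_half_pow]
  linarith

include hlam in
lemma lam_le_one (n : ℕ) : lam n ≤ 1 := by
  have := hlam n
  have h2 : ((1:ℝ)/2) ^ n ≤ 1 := pow_le_one₀ (by norm_num) (by norm_num)
  linarith

include hpos in
lemma gterm_nonneg (n : ℕ) (y : ℝ) : 0 ≤ gterm lam n y := by
  have h : Real.exp (-(lam n * Real.log (1 + y ^ 2))) ≤ 1 := by
    apply Real.exp_le_one_iff.2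
    have := (hpos n).le
    have := log_one_add_sq_nonneg y
    nlinarith
  simp only [gterm]; linarith

lemma gterm_le_one (n : ℕ) (y : ℝ) : gterm lam n y ≤ 1 := by
  have := Real.exp_pos (-(lam n * Real.log (1 + y ^ 2)))
  simp only [gterm]; linarith

lemma gterm_le (n : ℕ) (y : ℝ) : gterm lam n y ≤ lam n * Real.log (1 + y ^ 2) :=
  one_sub_exp_neg_le _

include hpos hlam in
lemma summable_gterm (y : ℝ) : Summable (fun n => gterm lam n y) := by
  apply Summable.of_nonneg_of_le (fun n => gterm_nonneg hpos n y) (fun n => gterm_le n y)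
  exact (summable_lam hpos hlam).mul_right _

end

lemma hasDerivAt_log_one_add_sq (y : ℝ) :
    HasDerivAt (fun y : ℝ => Real.log (1 + y ^ 2)) (2 * y / (1 + y ^ 2)) y := by
  have h1 : HasDerivAt (fun y : ℝ => 1 + y ^ 2) (2 * y) y := by
    simpa using (hasDerivAt_pow 2 y).const_add 1
  simpa using h1.log (one_add_sq_pos y).ne'

lemma hasDerivAt_gterm (lam : ℕ → ℝ) (n : ℕ) (y : ℝ) :
    HasDerivAt (gterm lam n) (gderiv lam n y) y := by
  have h2 := (((hasDerivAt_log_one_add_sq y).const_mul (lam n)).neg.exp).const_sub 1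
  have hval : gderiv lam n y =
      -(Real.exp (-(lam n * Real.log (1 + y ^ 2))) * -(lam n * (2 * y / (1 + y ^ 2)))) := by
    simp only [gderiv]; ring
  rw [hval]; exact h2

lemma hasDerivAt_gderiv (lam : ℕ → ℝ) (n : ℕ) (y : ℝ) :
    HasDerivAt (gderiv lam n) (gderiv2 lam n y) y := by
  have hy2 := one_add_sq_pos y
  have h1 : HasDerivAt (fun y : ℝ => 1 + y ^ 2) (2 * y) y := by
    simpa using (hasDerivAt_pow 2 y).const_add 1
  have h2 : HasDerivAt (fun y : ℝ => 2 * y) 2 y := by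
    simpa using (hasDerivAt_id y).const_mul 2
  have hG := h2.div h1 hy2.ne'
  have hE := (((hasDerivAt_log_one_add_sq y).const_mul (lam n)).neg.exp)
  have key := (hG.mul hE).const_mul (lam n)
  have hval : gderiv2 lam n y =
      lam n * ((2 * (1 + y ^ 2) - 2 * y * (2 * y)) / (1 + y ^ 2) ^ 2 *
          Real.exp (-(lam n * Real.log (1 + y ^ 2))) +
        2 * y / (1 + y ^ 2) *
          (Real.exp (-(lam n * Real.log (1 + y ^ 2))) * -(lam n * (2 * y / (1 + y ^ 2))))) := by
    simp only [gderiv2]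
    field_simp
    ring
  rw [hval]; exact key


section
variable {lam : ℕ → ℝ} (hpos : ∀ n, 0 < lam n) (hlam : ∀ n, lam n ≤ (1/2) ^ n / 16)

lemma abs_G_le_one (y : ℝ) : |2 * y / (1 + y ^ 2)| ≤ 1 := by
  rw [abs_div, abs_of_pos (one_add_sq_pos y), div_le_one (one_add_sq_pos y), abs_mul]
  simp only [abs_two]
  nlinarith [sq_abs y, sq_nonneg (|y| - 1)]

lemma exp_term_le_one (hpos : ∀ n, 0 < lam n) (n : ℕ) (y : ℝ) :
    Real.exp (-(lam n * Real.log (1 + y ^ 2))) ≤ 1 := by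
  apply Real.exp_le_one_iff.2
  have := (hpos n).le
  have := log_one_add_sq_nonneg y
  nlinarith

include hpos in
lemma gderiv_abs_le' (n : ℕ) (y : ℝ) :
    |gderiv lam n y| ≤ lam n * |2 * y / (1 + y ^ 2)| := by
  have hE := exp_term_le_one hpos n y
  have hE0 := (Real.exp_pos (-(lam n * Real.log (1 + y ^ 2)))).le
  have h := (hpos n).le
  simp only [gderiv, abs_mul, abs_of_nonneg h, abs_of_nonneg hE0]
  calc lam n * (|2 * y / (1 + y ^ 2)| * Real.exp (-(lam n * Real.log (1 + y ^ 2))))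
      ≤ lam n * (|2 * y / (1 + y ^ 2)| * 1) := by
        apply mul_le_mul_of_nonneg_left _ h
        exact mul_le_mul_of_nonneg_left hE (abs_nonneg _)
    _ = lam n * |2 * y / (1 + y ^ 2)| := by ring

include hpos in
lemma gderiv_abs_le (n : ℕ) (y : ℝ) : |gderiv lam n y| ≤ lam n := by
  refine (gderiv_abs_le' hpos n y).trans ?_
  nlinarith [(hpos n).le, abs_G_le_one y, abs_nonneg (2 * y / (1 + y ^ 2))]

include hpos hlam in
lemma summable_gderiv (y : ℝ) : Summable (fun n => gderiv lam n y) := by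
  apply Summable.of_norm_bounded (summable_lam hpos hlam)
  intro n
  simpa using gderiv_abs_le hpos n y

include hpos hlam in
lemma hasDerivAt_psi (y : ℝ) :
    HasDerivAt (psi lam) (∑' n, gderiv lam n y) y := by
  have h0 : Summable fun n => gterm lam n 0 := by
    have : (fun n => gterm lam n 0) = fun _ => (0:ℝ) := by
      funext n; simp [gterm]
    rw [this]; exact summable_zero
  exact hasDerivAt_tsum (summable_lam hpos hlam) (fun n x => hasDerivAt_gterm lam n x)
    (fun n x => by simpa using gderiv_abs_le hpos n x) h0 y

include hpos hlam in
lemma deriv_psi : deriv (psi lam) = fun y => ∑' n, gderiv lam n y :=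
  funext fun y => (hasDerivAt_psi hpos hlam y).deriv

include hpos hlam in
lemma gderiv2_abs_le (n : ℕ) (y : ℝ) : |gderiv2 lam n y| ≤ 3 * lam n := by
  have h := (hpos n).le
  have h1 := lam_le_one hlam n
  have hE := exp_term_le_one hpos n y
  have hE0 := (Real.exp_pos (-(lam n * Real.log (1 + y ^ 2)))).le
  have hG := abs_G_le_one y
  have hG0 := abs_nonneg (2 * y / (1 + y ^ 2))
  have hGsq : (2 * y / (1 + y ^ 2)) ^ 2 ≤ 1 := by
    rw [← sq_abs]; nlinarith
  have hGsq0 : 0 ≤ (2 * y / (1 + y ^ 2)) ^ 2 := sq_nonneg _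
  have hA : |2 * (1 - y ^ 2) / (1 + y ^ 2) ^ 2| ≤ 2 := by
    rw [abs_div, abs_of_pos (by positivity : (0:ℝ) < (1 + y ^ 2) ^ 2),
      div_le_iff₀ (by positivity : (0:ℝ) < (1 + y ^ 2) ^ 2), abs_mul, abs_two]
    have : |1 - y ^ 2| ≤ 1 + y ^ 2 := by
      rw [abs_le]; constructor <;> nlinarith [sq_nonneg y]
    nlinarith [sq_nonneg y, one_add_sq_pos y]
  have hbr : |2 * (1 - y ^ 2) / (1 + y ^ 2) ^ 2 - lam n * (2 * y / (1 + y ^ 2)) ^ 2| ≤ 3 := by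
    rw [abs_le] at hA ⊢
    constructor <;> nlinarith
  simp only [gderiv2, abs_mul, abs_of_nonneg h, abs_of_nonneg hE0]
  calc lam n * Real.exp (-(lam n * Real.log (1 + y ^ 2))) *
        |2 * (1 - y ^ 2) / (1 + y ^ 2) ^ 2 - lam n * (2 * y / (1 + y ^ 2)) ^ 2|
      ≤ lam n * 1 * 3 := by
        apply mul_le_mul _ hbr (abs_nonneg _) (by nlinarith)
        nlinarith
    _ ≤ 3 * lam n := by nlinarith

include hpos hlam in
lemma deriv_deriv_psi (y : ℝ) :
    deriv (deriv (psi lam)) y = ∑' n, gderiv2 lam n y := by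
  rw [deriv_psi hpos hlam]
  have h0 : Summable fun n => gderiv lam n 0 := by
    have : (fun n => gderiv lam n 0) = fun _ => (0:ℝ) := by
      funext n; simp [gderiv]
    rw [this]; exact summable_zero
  exact (hasDerivAt_tsum ((summable_lam hpos hlam).mul_left 3)
    (fun n x => hasDerivAt_gderiv lam n x)
    (fun n x => by simpa using gderiv2_abs_le hpos hlam n x) h0 y).deriv


include hpos hlam in
lemma psi_nonneg (y : ℝ) : 0 ≤ psi lam y :=
  tsum_nonneg (fun n => gterm_nonneg hpos n y)

omit hpos hlam in
lemma psi_even (y : ℝ) : psi lam (-y) = psi lam y := by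
  simp only [psi, gterm, neg_sq]

include hpos hlam in
lemma deriv_psi_nonneg {y : ℝ} (hy : 0 ≤ y) : 0 ≤ deriv (psi lam) y := by
  rw [deriv_psi hpos hlam]
  apply tsum_nonneg
  intro n
  have h := (hpos n).le
  have hE := (Real.exp_pos (-(lam n * Real.log (1 + y ^ 2)))).le
  have : 0 ≤ 2 * y / (1 + y ^ 2) := by positivity
  simp only [gderiv]; positivity

include hpos hlam in
lemma abs_deriv_psi_le (y : ℝ) : |deriv (psi lam) y| ≤ 1 / (1 + |y|) := by
  rw [deriv_psi hpos hlam]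
  have h1 : ‖∑' n, gderiv lam n y‖ ≤ ∑' n, lam n * |2 * y / (1 + y ^ 2)| := by
    apply tsum_of_norm_bounded (((summable_lam hpos hlam).mul_right _).hasSum)
    intro n
    simpa using gderiv_abs_le' hpos n y
  rw [Real.norm_eq_abs] at h1
  have h2 : ∑' n, lam n * |2 * y / (1 + y ^ 2)| = (∑' n, lam n) * |2 * y / (1 + y ^ 2)| :=
    tsum_mul_right
  have h3 := tsum_lam_le hpos hlam
  have h4 : (∑' n, lam n) * |2 * y / (1 + y ^ 2)| ≤ (1/4) * |2 * y / (1 + y ^ 2)| := by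
    apply mul_le_mul_of_nonneg_right h3 (abs_nonneg _)
  have h5 : (1/4) * |2 * y / (1 + y ^ 2)| ≤ 1 / (1 + |y|) := by
    rw [abs_div, abs_of_pos (one_add_sq_pos y), abs_mul, abs_two]
    rw [mul_div_assoc', div_le_div_iff₀ (one_add_sq_pos y) (by positivity : (0:ℝ) < 1 + |y|)]
    nlinarith [sq_abs y, abs_nonneg y, sq_nonneg (|y| - 1), sq_nonneg (|y| + 1)]
  calc |∑' n, gderiv lam n y| ≤ _ := h1
    _ = _ := h2
    _ ≤ _ := h4
    _ ≤ _ := h5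

include hpos hlam in
lemma deriv2_psi_nonpos {y : ℝ} (hy : 1 ≤ |y|) : deriv (deriv (psi lam)) y ≤ 0 := by
  rw [deriv_deriv_psi hpos hlam]
  apply tsum_nonpos
  intro n
  have h := (hpos n).le
  have hE := (Real.exp_pos (-(lam n * Real.log (1 + y ^ 2)))).le
  have hy2 : 1 ≤ y ^ 2 := by nlinarith [sq_abs y]
  have hbr : 2 * (1 - y ^ 2) / (1 + y ^ 2) ^ 2 - lam n * (2 * y / (1 + y ^ 2)) ^ 2 ≤ 0 := by
    have hb1 : 2 * (1 - y ^ 2) / (1 + y ^ 2) ^ 2 ≤ 0 := by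
      apply div_nonpos_of_nonpos_of_nonneg (by nlinarith) (by positivity)
    nlinarith [sq_nonneg (2 * y / (1 + y ^ 2))]
  simp only [gderiv2]
  apply mul_nonpos_of_nonneg_of_nonpos (by positivity) hbr


include hpos hlam in
lemma differentiable_psi : Differentiable ℝ (psi lam) :=
  fun y => (hasDerivAt_psi hpos hlam y).differentiableAt

include hpos hlam in
lemma psi_monotoneOn : MonotoneOn (psi lam) (Ici (0:ℝ)) := by
  apply monotoneOn_of_deriv_nonneg (convex_Ici 0)
    (differentiable_psi hpos hlam).continuous.continuousOn
    ((differentiable_psi hpos hlam).differentiableOn)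
  intro x hx
  rw [interior_Ici] at hx
  exact deriv_psi_nonneg hpos hlam (le_of_lt hx)

include hpos hlam in
lemma psi_ge_sum (y : ℝ) (s : Finset ℕ) : ∑ n ∈ s, gterm lam n y ≤ psi lam y :=
  Summable.sum_le_tsum s (fun n _ => gterm_nonneg hpos n y) (summable_gterm hpos hlam y)

include hpos hlam in
lemma psi_tendsto_atTop : Tendsto (psi lam) atTop atTop := by
  rw [tendsto_atTop]
  intro C
  set N : ℕ := 2 * ⌈C⌉₊ + 2 with hN
  have hNpos : 0 < N := by omega
  set eps : ℝ := (Finset.range N).inf' (by simp [hNpos] : (Finset.range N).Nonempty) lam with heps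
  have hepspos : 0 < eps := by
    rw [heps, Finset.lt_inf'_iff]
    exact fun n _ => hpos n
  filter_upwards [eventually_ge_atTop (max 1 (Real.exp (1 / eps)))] with y hy
  have hy1 : (1:ℝ) ≤ y := le_trans (le_max_left _ _) hy
  have hyA : Real.exp (1 / eps) ≤ y := le_trans (le_max_right _ _) hy
  have hLy : 1 / eps ≤ Real.log (1 + y ^ 2) := by
    rw [Real.le_log_iff_exp_le (one_add_sq_pos y)]
    nlinarith
  have hterm : ∀ n ∈ Finset.range N, (1:ℝ)/2 ≤ gterm lam n y := by
    intro n hn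
    have h1 : eps ≤ lam n := Finset.inf'_le _ hn
    have h2 : 1 ≤ lam n * Real.log (1 + y ^ 2) := by
      calc (1:ℝ) = eps * (1 / eps) := by field_simp
        _ ≤ lam n * Real.log (1 + y ^ 2) := by
            apply mul_le_mul h1 hLy (by positivity) ((hpos n).le)
    have h3 : Real.exp (-(lam n * Real.log (1 + y ^ 2))) ≤ Real.exp (-1) :=
      Real.exp_le_exp.2 (by linarith)
    have h4 : Real.exp (-1) ≤ 1/2 := by
      rw [Real.exp_neg]
      rw [inv_le_comm₀ (Real.exp_pos 1) (by norm_num)]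
      have := Real.add_one_le_exp 1
      linarith
    simp only [gterm]; linarith
  have hsum : (N:ℝ) * (1/2) ≤ ∑ n ∈ Finset.range N, gterm lam n y := by
    calc (N:ℝ) * (1/2) = ∑ _n ∈ Finset.range N, (1:ℝ)/2 := by simp
      _ ≤ _ := Finset.sum_le_sum hterm
  have hfin : C ≤ (N:ℝ) * (1/2) := by
    have := Nat.le_ceil C
    have : (⌈C⌉₊:ℝ) + 1 ≤ (N:ℝ) * (1/2) := by
      rw [hN]; push_cast; linarith
    linarith
  linarith [psi_ge_sum hpos hlam y (Finset.range N)]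

include hpos hlam in
lemma psi_tendsto_atBot : Tendsto (psi lam) atBot atTop := by
  have h : Tendsto (fun y => psi lam (-y)) atBot atTop :=
    (psi_tendsto_atTop hpos hlam).comp tendsto_neg_atBot_atTop
  simpa only [psi_even] using h

include hpos in
lemma psi_pos {y : ℝ} (hy : 0 < Real.log (1 + y ^ 2)) (hlam : ∀ n, lam n ≤ (1/2) ^ n / 16) :
    0 < psi lam y := by
  have h0 : 0 < gterm lam 0 y := by
    simp only [gterm, sub_pos]
    apply Real.exp_lt_one_iff.2
    have := hpos 0
    nlinarith
  calc (0:ℝ) < gterm lam 0 y := h0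
    _ = ∑ n ∈ {0}, gterm lam n y := by simp
    _ ≤ psi lam y := psi_ge_sum hpos hlam y {0}


include hpos hlam in
lemma psi_upper {T : ℕ → ℝ} (hT1 : ∀ n : ℕ, (n:ℝ) + 1 ≤ T n) (hTmono : Monotone T)
    (hlamT : ∀ n : ℕ, lam n ≤ (1/2) ^ n / T n) (k : ℕ) (y : ℝ)
    (hLy : Real.log (1 + y ^ 2) ≤ T (k+1)) : psi lam y ≤ (k:ℝ) + 2 := by
  have hsummable := summable_gterm hpos hlam y
  have hsplit : ∑ n ∈ Finset.range (k+1), gterm lam n y + ∑' n, gterm lam (n + (k+1)) y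
      = psi lam y := Summable.sum_add_tsum_nat_add (f := fun n => gterm lam n y) (k+1) hsummable
  have hTpos : ∀ m, (0:ℝ) < T m := fun m => lt_of_lt_of_le (by positivity) (hT1 m)
  have hhead : ∑ n ∈ Finset.range (k+1), gterm lam n y ≤ (k:ℝ) + 1 := by
    calc ∑ n ∈ Finset.range (k+1), gterm lam n y ≤ ∑ _n ∈ Finset.range (k+1), (1:ℝ) :=
          Finset.sum_le_sum (fun n _ => gterm_le_one n y)
      _ = (k:ℝ) + 1 := by simp
  have htail : ∑' n, gterm lam (n + (k+1)) y ≤ 1 := by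
    have hb : ∀ n : ℕ, gterm lam (n + (k+1)) y ≤ ((1:ℝ)/2) ^ (n + (k+1)) := by
      intro n
      have hLy0 := log_one_add_sq_nonneg y
      have h1 : gterm lam (n + (k+1)) y ≤ lam (n + (k+1)) * Real.log (1 + y ^ 2) :=
        gterm_le _ y
      have h2 : lam (n + (k+1)) * Real.log (1 + y ^ 2) ≤
          ((1/2) ^ (n + (k+1)) / T (n + (k+1))) * Real.log (1 + y ^ 2) :=
        mul_le_mul_of_nonneg_right (hlamT _) hLy0
      have h3 : Real.log (1 + y ^ 2) ≤ T (n + (k+1)) :=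
        le_trans hLy (hTmono (by omega))
      have h4 : ((1/2) ^ (n + (k+1)) / T (n + (k+1))) * Real.log (1 + y ^ 2) ≤
          ((1:ℝ)/2) ^ (n + (k+1)) := by
        rw [div_mul_eq_mul_div, div_le_iff₀ (hTpos _)]
        have : ((0:ℝ)) ≤ ((1:ℝ)/2) ^ (n + (k+1)) := by positivity
        nlinarith
      linarith
    have hsb : Summable (fun n : ℕ => ((1:ℝ)/2) ^ (n + (k+1))) := by
      apply Summable.of_nonneg_of_le (fun n => by positivity) (fun n => le_of_eq (pow_add _ _ _))
      exact summable_half_pow.mul_right _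
    calc ∑' n, gterm lam (n + (k+1)) y ≤ ∑' n : ℕ, ((1:ℝ)/2) ^ (n + (k+1)) :=
          Summable.tsum_le_tsum hb ((summable_nat_add_iff (f := fun n => gterm lam n y) (k+1)).2
            hsummable) hsb
      _ = (∑' n : ℕ, ((1:ℝ)/2) ^ n) * ((1:ℝ)/2) ^ (k+1) := by
          rw [← tsum_mul_right]
          congr 1; funext n; rw [pow_add]
      _ = 2 * ((1:ℝ)/2) ^ (k+1) := by rw [tsum_half_pow]
      _ ≤ 1 := by
          have h5 : ((1:ℝ)/2) ^ (k+1) ≤ (1:ℝ)/2 ^ 1 := by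
            rw [div_pow, one_pow]
            apply div_le_div_of_nonneg_left (by norm_num) (by norm_num)
            apply pow_le_pow_right₀ (by norm_num) (by omega)
          linarith
  linarith [hsplit]


noncomputable def Fterm (lam : ℕ → ℝ) (i : ℕ) (z : ℂ) : ℂ :=
  1 - Complex.exp (-((lam i : ℂ) * Complex.log (1 + z ^ 2)))

def Strip : Set ℂ := Complex.im ⁻¹' (Ioo (-(1/2) : ℝ) (1/2))

lemma strip_open : IsOpen Strip := isOpen_Ioo.preimage Complex.continuous_im

lemma strip_re_pos {z : ℂ} (hz : z ∈ Strip) : (3:ℝ)/4 ≤ (1 + z ^ 2).re := by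
  have h1 : (1 + z ^ 2).re = 1 + (z.re * z.re - z.im * z.im) := by
    simp [Complex.add_re, Complex.one_re, sq, Complex.mul_re]
  obtain ⟨ha, hb⟩ := hz
  rw [h1]
  nlinarith [mul_self_nonneg z.re]

lemma strip_slit {z : ℂ} (hz : z ∈ Strip) : (1 + z ^ 2) ∈ Complex.slitPlane :=
  Complex.mem_slitPlane_iff.mpr (Or.inl (by linarith [strip_re_pos hz]))

lemma Fterm_differentiableOn (lam : ℕ → ℝ) (i : ℕ) :
    DifferentiableOn ℂ (Fterm lam i) Strip := by
  intro z hz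
  apply DifferentiableAt.differentiableWithinAt
  have h1 : DifferentiableAt ℂ (fun z : ℂ => 1 + z ^ 2) z := by
    apply DifferentiableAt.const_add
    exact differentiableAt_pow 2
  have hlog : DifferentiableAt ℂ (fun z : ℂ => Complex.log (1 + z ^ 2)) z :=
    h1.clog (strip_slit hz)
  exact ((hlog.const_mul _).neg.cexp).const_sub 1

lemma log_norm_bound {R : ℝ} (hR : 1 ≤ R) {z : ℂ} (hz : z ∈ Metric.ball (0:ℂ) R ∩ Strip) :
    ‖Complex.log (1 + z ^ 2)‖ ≤ Real.log (1 + R ^ 2) + 5 := by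
  obtain ⟨hzR, hzS⟩ := hz
  set w : ℂ := 1 + z ^ 2 with hw
  have hre := strip_re_pos hzS
  have habs_low : (3:ℝ)/4 ≤ ‖w‖ := le_trans hre (Complex.re_le_norm w)
  have habs_pos : (0:ℝ) < ‖w‖ := by linarith
  have hzn : ‖z‖ < R := by simpa using mem_ball_zero_iff.1 hzR
  have habs_hi : ‖w‖ ≤ 1 + R ^ 2 := by
    calc ‖w‖ ≤ ‖(1:ℂ)‖ + ‖z ^ 2‖ := norm_add_le _ _
      _ = 1 + ‖z‖ ^ 2 := by simp [norm_pow]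
      _ ≤ 1 + R ^ 2 := by nlinarith [norm_nonneg z]
  have h1 : ‖Complex.log w‖ ≤ |(Complex.log w).re| + |(Complex.log w).im| :=
    Complex.norm_le_abs_re_add_abs_im _
  have h2 : |(Complex.log w).im| ≤ 4 := by
    rw [Complex.log_im]
    exact (Complex.abs_arg_le_pi w).trans Real.pi_le_four
  have h3 : |(Complex.log w).re| ≤ Real.log (1 + R ^ 2) + 1 := by
    rw [Complex.log_re, abs_le]
    have hlogR : (0:ℝ) ≤ Real.log (1 + R ^ 2) := Real.log_nonneg (by nlinarith)
    constructor
    · have hlow : Real.log ((3:ℝ)/4) ≤ Real.log ‖w‖ :=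
        Real.log_le_log (by norm_num) habs_low
      have : (-1:ℝ) ≤ Real.log ((3:ℝ)/4) := by
        rw [← Real.exp_le_exp, Real.exp_log (by norm_num)]
        rw [Real.exp_neg]
        have h2e := Real.add_one_le_exp 1
        rw [inv_le_comm₀ (Real.exp_pos 1) (by norm_num)]
        linarith
      linarith
    · have := Real.log_le_log habs_pos habs_hi
      linarith
  linarith


include hpos hlam in
lemma analyticAt_tsum_Fterm (x : ℝ) :
    AnalyticAt ℂ (fun z => ∑' i, Fterm lam i z) (x : ℂ) := by
  set R : ℝ := |x| + 1 with hR
  have hR1 : 1 ≤ R := by rw [hR]; linarith [abs_nonneg x]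
  set CR : ℝ := Real.log (1 + R ^ 2) + 5 with hCR
  have hCRpos : 0 < CR := by
    have : (0:ℝ) ≤ Real.log (1 + R ^ 2) := Real.log_nonneg (by nlinarith)
    linarith
  set U : Set ℂ := Metric.ball (0:ℂ) R ∩ Strip with hU
  have hUopen : IsOpen U := Metric.isOpen_ball.inter strip_open
  have hxU : (x:ℂ) ∈ U := by
    constructor
    · rw [mem_ball_zero_iff]
      have : ‖(x:ℂ)‖ = |x| := by simp
      rw [this]; linarith
    · show (x:ℂ).im ∈ Ioo (-(1/2):ℝ) (1/2)
      simp only [Complex.ofReal_im]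
      constructor <;> norm_num
  -- index beyond which lam i * CR ≤ 1
  obtain ⟨i₀, hi₀⟩ : ∃ i₀ : ℕ, ∀ i ≥ i₀, ((1:ℝ)/2) ^ i < 1 / CR := by
    have htend : Tendsto (fun i : ℕ => ((1:ℝ)/2) ^ i) atTop (nhds 0) :=
      tendsto_pow_atTop_nhds_zero_of_lt_one (by norm_num) (by norm_num)
    have := htend.eventually (gt_mem_nhds (by positivity : (0:ℝ) < 1 / CR))
    exact eventually_atTop.1 this
  have hlam1 : ∀ i : ℕ, lam i ≤ ((1:ℝ)/2) ^ i := by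
    intro i
    have h1 := hlam i
    have h2 : ((1:ℝ)/2) ^ i / 16 ≤ ((1:ℝ)/2) ^ i := by
      have : (0:ℝ) ≤ ((1:ℝ)/2) ^ i := by positivity
      linarith
    linarith
  have hbound : ∀ (i : ℕ) (z : ℂ), z ∈ U → ‖Fterm lam (i + i₀) z‖ ≤ 2 * CR * lam (i + i₀) := by
    intro i z hz
    have hlog := log_norm_bound hR1 hz
    set v : ℂ := -((lam (i + i₀) : ℂ) * Complex.log (1 + z ^ 2)) with hv
    have hvnorm : ‖v‖ = lam (i + i₀) * ‖Complex.log (1 + z ^ 2)‖ := by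
      rw [hv, norm_neg, norm_mul, Complex.norm_real, Real.norm_eq_abs,
        abs_of_pos (hpos (i + i₀))]
    have hv1 : ‖v‖ ≤ 1 := by
      rw [hvnorm]
      rw [← hCR] at hlog
      have h1 : lam (i + i₀) * ‖Complex.log (1 + z ^ 2)‖ ≤ lam (i + i₀) * CR :=
        mul_le_mul_of_nonneg_left hlog (hpos _).le
      have h2 : lam (i + i₀) * CR ≤ (((1:ℝ)/2) ^ (i + i₀)) * CR :=
        mul_le_mul_of_nonneg_right (hlam1 _) hCRpos.le
      have h3 : (((1:ℝ)/2) ^ (i + i₀)) * CR ≤ (1 / CR) * CR :=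
        mul_le_mul_of_nonneg_right (hi₀ (i + i₀) (by omega)).le hCRpos.le
      have h4 : (1 / CR) * CR = 1 := by field_simp
      exact h1.trans (h2.trans (h3.trans (le_of_eq h4)))
    have habs := Complex.norm_exp_sub_one_le (x := v) hv1
    have heq : ‖Fterm lam (i + i₀) z‖ = ‖Complex.exp v - 1‖ := by
      rw [Fterm, norm_sub_rev, hv]
    rw [heq]
    calc ‖Complex.exp v - 1‖ ≤ 2 * ‖v‖ := habs
      _ = 2 * (lam (i + i₀) * ‖Complex.log (1 + z ^ 2)‖) := by
          rw [hvnorm]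
      _ ≤ 2 * (lam (i + i₀) * CR) := by
          apply mul_le_mul_of_nonneg_left _ (by norm_num)
          exact mul_le_mul_of_nonneg_left hlog (hpos _).le
      _ = 2 * CR * lam (i + i₀) := by ring
  have hsum' : Summable (fun i : ℕ => 2 * CR * lam (i + i₀)) := by
    apply Summable.mul_left
    exact (summable_nat_add_iff i₀).2 (summable_lam hpos hlam)
  have htail : DifferentiableOn ℂ (fun z => ∑' i, Fterm lam (i + i₀) z) U :=
    Complex.differentiableOn_tsum_of_summable_norm hsum'
      (fun i => (Fterm_differentiableOn lam (i + i₀)).mono inter_subset_right)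
      hUopen hbound
  have hsumz : ∀ z ∈ U, Summable (fun i => Fterm lam i z) := by
    intro z hz
    apply (summable_nat_add_iff (f := fun i => Fterm lam i z) i₀).1
    exact Summable.of_norm_bounded hsum' (fun i => hbound i z hz)
  have hhead : DifferentiableOn ℂ (fun z => ∑ i ∈ Finset.range i₀, Fterm lam i z) U :=
    DifferentiableOn.fun_sum (fun i _ => (Fterm_differentiableOn lam i).mono inter_subset_right)
  have hΨ : DifferentiableOn ℂ (fun z => ∑' i, Fterm lam i z) U := by
    apply (hhead.add htail).congr
    intro z hz
    exact (Summable.sum_add_tsum_nat_add (f := fun i => Fterm lam i z) i₀ (hsumz z hz)).symm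
  exact (hΨ.analyticOnNhd hUopen) _ hxU

include hpos hlam in
lemma psi_contDiff : ContDiff ℝ (⊤ : ℕ∞) (psi lam) := by
  have hreal : ∀ x : ℝ, (∑' i, Fterm lam i (x:ℂ)) = ((psi lam x : ℝ) : ℂ) := by
    intro x
    have hterm : ∀ i : ℕ, Fterm lam i (x:ℂ) = ((gterm lam i x : ℝ) : ℂ) := by
      intro i
      have h1 : ((1:ℂ) + (x:ℂ) ^ 2) = (((1 + x ^ 2 : ℝ)) : ℂ) := by push_cast; ring
      rw [Fterm, gterm, h1, ← Complex.ofReal_log (one_add_sq_pos x).le,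
        ← Complex.ofReal_mul, ← Complex.ofReal_neg, ← Complex.ofReal_exp]
      push_cast
      ring
    rw [funext hterm] at *
    rw [psi, Complex.ofReal_tsum]
  have hana : ∀ x : ℝ, AnalyticAt ℝ (psi lam) x := by
    intro x
    have h1 : AnalyticAt ℝ (fun z => ∑' i, Fterm lam i z) (x:ℂ) :=
      (analyticAt_tsum_Fterm hpos hlam x).restrictScalars
    have h2 : AnalyticAt ℝ (fun t : ℝ => (t : ℂ)) x := Complex.ofRealCLM.analyticAt x
    have h3 : AnalyticAt ℝ (fun t : ℝ => ∑' i, Fterm lam i (t:ℂ)) x := h1.comp h2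
    have h4 : AnalyticAt ℝ (fun t : ℝ => (∑' i, Fterm lam i (t:ℂ)).re) x :=
      (Complex.reCLM.analyticAt _).comp h3
    have h5 : (fun t : ℝ => (∑' i, Fterm lam i (t:ℂ)).re) = psi lam := by
      funext t
      rw [hreal t, Complex.ofReal_re]
    rw [← h5]
    exact h4
  have : AnalyticOnNhd ℝ (psi lam) univ := fun x _ => hana x
  exact this.contDiff

end
end Stmt1Helper

open Stmt1Helper in
/-- Two-sided concave minorant construction: given `ξ : ℝ → [0,∞)` with `ξ(y) → ∞`
as `y → ±∞`, there is an even `C^∞` function `ψ : ℝ → [0,∞)`, non-decreasing on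
`[0,∞)`, with `ψ → ∞` and `ξ/ψ → ∞` at `±∞`, and for `|y| ≥ 1`, `ψ''(y) ≤ 0` and
`|ψ'(y)| ≤ 1/(1+|y|)`. -/
theorem stmt1 (ξ : ℝ → ℝ) (hξ0 : ∀ y, 0 ≤ ξ y)
    (hξtop : Tendsto ξ atTop atTop) (hξbot : Tendsto ξ atBot atTop) :
    ∃ ψ : ℝ → ℝ, ContDiff ℝ (⊤ : ℕ∞) ψ ∧ (∀ y, 0 ≤ ψ y) ∧
      (∀ y, ψ (-y) = ψ y) ∧
      MonotoneOn ψ (Ici (0:ℝ)) ∧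
      Tendsto ψ atTop atTop ∧ Tendsto ψ atBot atTop ∧
      Tendsto (fun y => ξ y / ψ y) atTop atTop ∧
      Tendsto (fun y => ξ y / ψ y) atBot atTop ∧
      (∀ y : ℝ, 1 ≤ |y| → deriv (deriv ψ) y ≤ 0 ∧ |deriv ψ y| ≤ 1 / (1 + |y|)) := by
  -- thresholds
  have hthr : ∀ n : ℕ, ∃ t : ℝ, ∀ y : ℝ, t ≤ Real.log (1 + y ^ 2) → ((n:ℝ))^2 ≤ ξ y := by
    intro n
    obtain ⟨a, ha⟩ := eventually_atTop.1 (hξtop.eventually_ge_atTop ((n:ℝ)^2))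
    obtain ⟨b, hb⟩ := eventually_atBot.1 (hξbot.eventually_ge_atTop ((n:ℝ)^2))
    set r : ℝ := max a (max (-b) 1) with hrdef
    have hr1 : (1:ℝ) ≤ r := le_trans (le_max_right _ _) (le_max_right _ _)
    refine ⟨Real.log (1 + r ^ 2), fun y hy => ?_⟩
    have hsq : 1 + r ^ 2 ≤ 1 + y ^ 2 := by
      have h1 := Real.exp_le_exp.2 hy
      rwa [Real.exp_log (one_add_sq_pos r), Real.exp_log (one_add_sq_pos y)] at h1
    have hry : r ≤ |y| := by nlinarith [abs_nonneg y, sq_abs y]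
    rcases le_abs.1 hry with h | h
    · exact ha y (le_trans (le_max_left _ _) h)
    · refine hb y ?_
      have hrb : -b ≤ r := le_trans (le_max_left _ _) (le_max_right _ _)
      linarith
  choose t ht using hthr
  -- monotone threshold sequence
  set T : ℕ → ℝ := fun n => Nat.rec (max 1 (t 0))
    (fun n Tn => max Tn (max ((n:ℝ) + 2) (t (n+1)))) n with hTdef
  have hTsucc : ∀ n : ℕ, T (n+1) = max (T n) (max ((n:ℝ) + 2) (t (n+1))) := fun n => rfl
  have hT1 : ∀ n : ℕ, (n:ℝ) + 1 ≤ T n := by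
    intro n
    cases n with
    | zero =>
      have hT0 : T 0 = max 1 (t 0) := rfl
      rw [hT0]
      exact le_trans (by norm_num) (le_max_left _ _)
    | succ m =>
      rw [hTsucc m]
      push_cast
      have : (m:ℝ) + 1 + 1 = (m:ℝ) + 2 := by ring
      rw [this]
      exact le_trans (le_max_left _ _) (le_max_right _ _)
  have hTmono : Monotone T :=
    monotone_nat_of_le_succ (fun n => by rw [hTsucc]; exact le_max_left _ _)
  have hTt : ∀ n : ℕ, t n ≤ T n := by
    intro n
    cases n with
    | zero => exact le_max_right _ _
    | succ m =>
      rw [hTsucc m]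
      exact le_trans (le_max_right _ _) (le_max_right _ _)
  have hTthr : ∀ (n : ℕ) (y : ℝ), T n ≤ Real.log (1 + y ^ 2) → ((n:ℝ))^2 ≤ ξ y :=
    fun n y h => ht n y (le_trans (hTt n) h)
  have hTpos : ∀ n : ℕ, (0:ℝ) < T n := fun n => lt_of_lt_of_le (by positivity) (hT1 n)
  -- the lambda sequence
  set lam : ℕ → ℝ := fun n => min ((1/2) ^ n / 16) ((1/2) ^ n / T n) with hlamdef
  have hpos : ∀ n, 0 < lam n := by
    intro n
    apply lt_min (by positivity)
    exact div_pos (by positivity) (hTpos n)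
  have hlam : ∀ n, lam n ≤ (1/2) ^ n / 16 := fun n => min_le_left _ _
  have hlamT : ∀ n : ℕ, lam n ≤ (1/2) ^ n / T n := fun n => min_le_right _ _
  -- key ratio estimate
  have hkey : ∀ C : ℝ, ∀ y : ℝ, Real.exp (T (⌈C⌉₊ + 4)) ≤ 1 + y ^ 2 →
      C ≤ ξ y / psi lam y := by
    intro C y hy
    set N : ℕ := ⌈C⌉₊ + 4 with hN
    have hLy : T N ≤ Real.log (1 + y ^ 2) :=
      (Real.le_log_iff_exp_le (one_add_sq_pos y)).2 hy
    set Ly : ℝ := Real.log (1 + y ^ 2) with hLydef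
    have hex : ∃ n : ℕ, Ly < T n := by
      refine ⟨⌈Ly⌉₊, lt_of_le_of_lt (Nat.le_ceil Ly) ?_⟩
      have := hT1 ⌈Ly⌉₊
      linarith
    set j : ℕ := Nat.find hex with hj
    have hjspec : Ly < T j := Nat.find_spec hex
    have hNj : N < j := by
      by_contra hcon
      push_neg at hcon
      exact absurd (le_trans (hTmono hcon) hLy) (not_le.2 hjspec)
    obtain ⟨k, hk⟩ : ∃ k : ℕ, j = k + 1 := ⟨j - 1, by omega⟩
    have hTk : T k ≤ Ly := not_lt.1 (Nat.find_min hex (by omega : k < j))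
    have hkN : N ≤ k := by omega
    have hξy : ((k:ℝ))^2 ≤ ξ y := hTthr k y hTk
    have hup : psi lam y ≤ (k:ℝ) + 2 := by
      apply psi_upper hpos hlam hT1 hTmono hlamT k y
      rw [← hk]
      exact hjspec.le
    have hpsipos : 0 < psi lam y := by
      apply psi_pos hpos _ hlam
      have h1 : (1:ℝ) ≤ T N := le_trans (by linarith [(by exact_mod_cast Nat.zero_le N : (0:ℝ) ≤ (N:ℝ))] : (1:ℝ) ≤ (N:ℝ)+1) (hT1 N)
      linarith
    rw [le_div_iff₀ hpsipos]
    have hCk : C ≤ (k:ℝ) - 4 := by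
      have h1 := Nat.le_ceil C
      have h2 : ((⌈C⌉₊ + 4 : ℕ):ℝ) ≤ (k:ℝ) := by exact_mod_cast hkN
      push_cast at h2
      linarith
    have h4k : (4:ℝ) ≤ (k:ℝ) := by
      have : ((4:ℕ):ℝ) ≤ ((k:ℕ):ℝ) := by exact_mod_cast (by omega : 4 ≤ k)
      simpa using this
    nlinarith [mul_le_mul_of_nonneg_right hCk hpsipos.le,
      mul_le_mul_of_nonneg_left hup (by linarith : (0:ℝ) ≤ (k:ℝ) - 4)]
  refine ⟨psi lam, psi_contDiff hpos hlam, psi_nonneg hpos hlam, psi_even,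
    psi_monotoneOn hpos hlam, psi_tendsto_atTop hpos hlam, psi_tendsto_atBot hpos hlam,
    ?_, ?_, fun y hy => ⟨deriv2_psi_nonpos hpos hlam hy, abs_deriv_psi_le hpos hlam y⟩⟩
  · -- ratio atTop
    rw [tendsto_atTop]
    intro C
    filter_upwards [eventually_ge_atTop (Real.exp (T (⌈C⌉₊ + 4)))] with y hy
    apply hkey C y
    have h1 : (0:ℝ) < Real.exp (T (⌈C⌉₊ + 4)) := Real.exp_pos _
    nlinarith [sq_nonneg (y - 1)]
  · -- ratio atBot
    rw [tendsto_atTop]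
    intro C
    filter_upwards [eventually_le_atBot (-Real.exp (T (⌈C⌉₊ + 4)))] with y hy
    apply hkey C y
    have h1 : (0:ℝ) < Real.exp (T (⌈C⌉₊ + 4)) := Real.exp_pos _
    nlinarith [sq_nonneg (y + 1)]
end

section
/- Let (f_m)_{m∈ℕ} be a sequence of nonnegative functions on [0,∞) with f_0 ≤ 1, and suppose there is a constant C > 0 such that for all m ≥ 0 and u ≥ 0, e^{Cu} f_{m+1}(u) ≤ C ∫_0^u e^{Cr} f_m(r) dr. Then for all m ≥ 0 and u ≥ 0, f_m(u) ≤ 1 − e^{−Cu} ∑_{n=0}^{m−1} (Cu)^n / n!. In particular, f_m(u) → 0 as m → ∞ for each fixed u. -/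
open Filter Set intervalIntegral

/-- Poisson-tail induction: if `f 0 ≤ 1`, the `f m` are nonnegative on `[0,∞)`, and
`e^{Cu} f_{m+1}(u) ≤ C ∫_0^u e^{Cr} f_m(r) dr`, then
`f m u ≤ 1 − e^{−Cu} ∑_{n<m} (Cu)^n/n!`, and `f m u → 0` as `m → ∞`. -/
theorem stmt3 (f : ℕ → ℝ → ℝ) (C : ℝ) (hC : 0 < C)
    (hnonneg : ∀ m, ∀ u ≥ (0:ℝ), 0 ≤ f m u)
    (h0 : ∀ u ≥ (0:ℝ), f 0 u ≤ 1)
    (hrec : ∀ m, ∀ u ≥ (0:ℝ),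
      Real.exp (C * u) * f (m + 1) u ≤ C * ∫ r in (0:ℝ)..u, Real.exp (C * r) * f m r) :
    (∀ m, ∀ u ≥ (0:ℝ),
      f m u ≤ 1 - Real.exp (-(C * u)) * ∑ n ∈ Finset.range m, (C * u) ^ n / n.factorial) ∧
    ∀ u ≥ (0:ℝ), Tendsto (fun m => f m u) atTop (nhds 0) := by
  have key : ∀ m, ∀ u ≥ (0:ℝ),
      f m u ≤ 1 - Real.exp (-(C * u)) * ∑ n ∈ Finset.range m, (C * u) ^ n / n.factorial := by
    intro m
    induction m with
    | zero => intro u hu; simpa using h0 u hu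
    | succ m ih =>
      intro u hu
      set P : ℝ → ℝ := fun r => ∑ n ∈ Finset.range m, (C * r) ^ n / n.factorial with hPdef
      -- pointwise bound for the integrand
      have hpt : ∀ r ∈ Set.Icc (0:ℝ) u,
          Real.exp (C * r) * f m r ≤ Real.exp (C * r) - P r := by
        intro r hr
        have h1 := ih r hr.1
        have h2 : Real.exp (C * r) * f m r
            ≤ Real.exp (C * r) * (1 - Real.exp (-(C * r)) * P r) :=
          mul_le_mul_of_nonneg_left h1 (Real.exp_pos _).le
        have h3 : Real.exp (C * r) * (1 - Real.exp (-(C * r)) * P r)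
            = Real.exp (C * r) - P r := by
          rw [Real.exp_neg]
          field_simp
        linarith
      have hPcont : Continuous P := by
        apply continuous_finset_sum
        intro n _
        exact ((continuous_const.mul continuous_id).pow n).div_const _
      have hcont : Continuous (fun r => Real.exp (C * r) - P r) :=
        (Real.continuous_exp.comp (continuous_const.mul continuous_id)).sub hPcont
      have hnn : ∀ r ∈ Set.Icc (0:ℝ) u, 0 ≤ Real.exp (C * r) - P r := by
        intro r hr
        have : P r ≤ Real.exp (C * r) := by
          have hx : (0:ℝ) ≤ C * r := mul_nonneg hC.le hr.1
          simpa [hPdef] using Real.sum_le_exp_of_nonneg hx m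
        linarith
      -- bound the integral
      have hIbound : (∫ r in (0:ℝ)..u, Real.exp (C * r) * f m r)
          ≤ ∫ r in (0:ℝ)..u, (Real.exp (C * r) - P r) := by
        by_cases hint : IntervalIntegrable (fun r => Real.exp (C * r) * f m r)
            MeasureTheory.volume 0 u
        · exact intervalIntegral.integral_mono_on hu hint (hcont.intervalIntegrable _ _) hpt
        · rw [intervalIntegral.integral_undef hint]
          apply intervalIntegral.integral_nonneg hu
          intro r hr; exact hnn r hr
      -- compute the right-hand integral
      have hexp : (∫ r in (0:ℝ)..u, Real.exp (C * r)) = (Real.exp (C * u) - 1) / C := by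
        have := intervalIntegral.integral_comp_mul_left (fun x => Real.exp x)
          (a := (0:ℝ)) (b := u) (c := C) hC.ne'
        simp only [integral_exp, mul_zero, Real.exp_zero, smul_eq_mul] at this
        rw [this]; field_simp
      have hsum : (∫ r in (0:ℝ)..u, P r)
          = ∑ n ∈ Finset.range m, C ^ n * u ^ (n + 1) / ((n + 1) * n.factorial) := by
        rw [hPdef]
        rw [intervalIntegral.integral_finset_sum]
        · apply Finset.sum_congr rfl
          intro n _
          have h1 : (fun r : ℝ => (C * r) ^ n / (n.factorial : ℝ))
              = fun r : ℝ => (C ^ n / (n.factorial : ℝ)) * r ^ n := by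
            funext r; rw [mul_pow]; ring
          rw [h1, intervalIntegral.integral_const_mul, integral_pow,
            zero_pow (Nat.succ_ne_zero n)]
          have hf : ((n.factorial:ℝ)) ≠ 0 := Nat.cast_ne_zero.mpr n.factorial_ne_zero
          have hn1 : ((n:ℝ)+1) ≠ 0 := by positivity
          push_cast
          field_simp
          ring
        · intro n _
          exact (((continuous_const.mul continuous_id).pow n).div_const _).intervalIntegrable _ _
      have hIsub : (∫ r in (0:ℝ)..u, (Real.exp (C * r) - P r))
          = (∫ r in (0:ℝ)..u, Real.exp (C * r)) - ∫ r in (0:ℝ)..u, P r := by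
        apply intervalIntegral.integral_sub
        · exact (Real.continuous_exp.comp (continuous_const.mul continuous_id)).intervalIntegrable _ _
        · exact hPcont.intervalIntegrable _ _
      -- put everything together
      have hmain : Real.exp (C * u) * f (m + 1) u
          ≤ Real.exp (C * u) - ∑ n ∈ Finset.range (m + 1), (C * u) ^ n / n.factorial := by
        have h4 := hrec m u hu
        have h5 : C * (∫ r in (0:ℝ)..u, Real.exp (C * r) * f m r)
            ≤ C * ((Real.exp (C * u) - 1) / C
              - ∑ n ∈ Finset.range m, C ^ n * u ^ (n + 1) / ((n + 1) * n.factorial)) := by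
          apply mul_le_mul_of_nonneg_left _ hC.le
          rw [← hexp, ← hsum, ← hIsub]; exact hIbound
        have h6 : C * ((Real.exp (C * u) - 1) / C
              - ∑ n ∈ Finset.range m, C ^ n * u ^ (n + 1) / ((n + 1) * n.factorial))
            = Real.exp (C * u) - ∑ n ∈ Finset.range (m + 1), (C * u) ^ n / n.factorial := by
          rw [Finset.sum_range_succ']
          simp only [pow_zero, Nat.factorial_zero, Nat.cast_one]
          rw [mul_sub, Finset.mul_sum]
          have hCne : C ≠ 0 := hC.ne'
          have hterm : ∀ n ∈ Finset.range m,
              C * (C ^ n * u ^ (n + 1) / ((n + 1) * n.factorial))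
              = (C * u) ^ (n + 1) / ((n + 1).factorial : ℝ) := by
            intro n _
            rw [Nat.factorial_succ, mul_pow]
            push_cast
            ring
          rw [Finset.sum_congr rfl hterm]
          field_simp
          ring
        calc Real.exp (C * u) * f (m + 1) u ≤ _ := h4
          _ ≤ _ := h5
          _ = _ := h6
      -- divide by exp(Cu)
      have hexp_pos := Real.exp_pos (C * u)
      have htarget : Real.exp (C * u)
          * (1 - Real.exp (-(C * u)) * ∑ n ∈ Finset.range (m + 1), (C * u) ^ n / n.factorial)
          = Real.exp (C * u) - ∑ n ∈ Finset.range (m + 1), (C * u) ^ n / n.factorial := by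
        rw [Real.exp_neg]
        field_simp
      have h7 := hmain
      rw [← htarget] at h7
      exact le_of_mul_le_mul_left h7 hexp_pos
  refine ⟨key, ?_⟩
  intro u hu
  have hS : Tendsto (fun m => ∑ n ∈ Finset.range m, (C * u) ^ n / (n.factorial : ℝ))
      atTop (nhds (Real.exp (C * u))) := by
    have := (NormedSpace.expSeries_div_hasSum_exp (C * u)).tendsto_sum_nat
    rw [← Real.exp_eq_exp_ℝ] at this
    exact this
  have hupper : Tendsto (fun m => 1 - Real.exp (-(C * u))
      * ∑ n ∈ Finset.range m, (C * u) ^ n / (n.factorial : ℝ)) atTop (nhds 0) := by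
    have h1 : Tendsto (fun m => Real.exp (-(C * u))
        * ∑ n ∈ Finset.range m, (C * u) ^ n / (n.factorial : ℝ)) atTop
        (nhds (Real.exp (-(C * u)) * Real.exp (C * u))) := hS.const_mul _
    have h2 : Real.exp (-(C * u)) * Real.exp (C * u) = 1 := by
      rw [← Real.exp_add]; simp
    rw [h2] at h1
    have := (tendsto_const_nhds (x := (1:ℝ)) (f := atTop)).sub h1
    simpa using this
  exact tendsto_of_tendsto_of_tendsto_of_le_of_le tendsto_const_nhds hupper
    (fun m => hnonneg m u hu) (fun m => key m u hu)
end
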